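/- Let D and Q be Borel probability measures on ℝ^d, let ℓ : ℝ → ℝ → ℝ be a measurable loss that is symmetric, L-Lipschitz in each argument, and satisfies 0 ≤ ℓ ≤ M, and let h, h* : ℝ^d → ℝ be measurable functions with values in [0,1]. Then for every coupling γ of (D,Q), |∫ ℓ(h(x), h*(x)) dD(x) − ∫ ℓ(h(x), h*(x)) dQ(x)| ≤ L·∫ |h*(x) − h*(y)| dγ(x,y) + L·∫ |h(x) − h(y)| dγ(x,y). -/
import Mathlib


open MeasureTheory

/-- A coupling of `(μ, ν)`: a probability measure on the product whose first marginal
is `μ` and whose second marginal is `ν`. -/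
def IsCoupling {E : Type*} [MeasurableSpace E]
    (γ : Measure (E × E)) (μ ν : Measure E) : Prop :=
  IsProbabilityMeasure γ ∧ γ.map Prod.fst = μ ∧ γ.map Prod.snd = ν

theorem stmt_2 (d : ℕ)
    (D Q : Measure (EuclideanSpace ℝ (Fin d)))
    [IsProbabilityMeasure D] [IsProbabilityMeasure Q]
    (ℓ : ℝ → ℝ → ℝ) (L M : ℝ)
    (hℓmeas : Measurable (Function.uncurry ℓ))
    (hℓsymm : ∀ u v, ℓ u v = ℓ v u)
    (hℓlip₁ : ∀ u u' v, |ℓ u v - ℓ u' v| ≤ L * |u - u'|)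
    (hℓlip₂ : ∀ u v v', |ℓ u v - ℓ u v'| ≤ L * |v - v'|)
    (hℓbd : ∀ u v, ℓ u v ∈ Set.Icc (0 : ℝ) M)
    (h hstar : EuclideanSpace ℝ (Fin d) → ℝ)
    (hmeas : Measurable h)
    (hrange : ∀ x, h x ∈ Set.Icc (0 : ℝ) 1)
    (hstarmeas : Measurable hstar)
    (hstarrange : ∀ x, hstar x ∈ Set.Icc (0 : ℝ) 1)
    (γ : Measure (EuclideanSpace ℝ (Fin d) × EuclideanSpace ℝ (Fin d)))
    (hγ : IsCoupling γ D Q) :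
    |∫ x, ℓ (h x) (hstar x) ∂D - ∫ x, ℓ (h x) (hstar x) ∂Q| ≤
      L * ∫ p, |hstar p.1 - hstar p.2| ∂γ + L * ∫ p, |h p.1 - h p.2| ∂γ := by
  obtain ⟨hprob, hfst, hsnd⟩ := hγ
  haveI := hprob
  set f : EuclideanSpace ℝ (Fin d) → ℝ := fun x => ℓ (h x) (hstar x) with hf_def
  have hL : 0 ≤ L := by
    have := hℓlip₁ 0 1 0
    simp at this
    exact le_trans (abs_nonneg _) this
  have hfmeas : Measurable f := hℓmeas.comp (hmeas.prodMk hstarmeas)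
  have hfbd : ∀ x, |f x| ≤ M := by
    intro x
    have := hℓbd (h x) (hstar x)
    rw [abs_le]
    constructor
    · linarith [this.1, this.2]
    · exact this.2
  have hintD : ∫ x, f x ∂D = ∫ p, f p.1 ∂γ := by
    rw [← hfst, integral_map measurable_fst.aemeasurable hfmeas.aestronglyMeasurable]
  have hintQ : ∫ x, f x ∂Q = ∫ p, f p.2 ∂γ := by
    rw [← hsnd, integral_map measurable_snd.aemeasurable hfmeas.aestronglyMeasurable]
  have hint1 : Integrable (fun p => f p.1) γ := by
    refine ⟨(hfmeas.comp measurable_fst).aestronglyMeasurable, ?_⟩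
    exact HasFiniteIntegral.of_bounded (C := M) (Filter.Eventually.of_forall fun p => hfbd p.1)
  have hint2 : Integrable (fun p => f p.2) γ := by
    refine ⟨(hfmeas.comp measurable_snd).aestronglyMeasurable, ?_⟩
    exact HasFiniteIntegral.of_bounded (C := M) (Filter.Eventually.of_forall fun p => hfbd p.2)
  have hbdstar : ∀ p : EuclideanSpace ℝ (Fin d) × EuclideanSpace ℝ (Fin d),
      ‖|hstar p.1 - hstar p.2|‖ ≤ 1 := by
    intro p
    rw [Real.norm_eq_abs, abs_abs, abs_sub_le_iff]
    constructor <;>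
      linarith [(hstarrange p.1).1, (hstarrange p.1).2, (hstarrange p.2).1, (hstarrange p.2).2]
  have hbdh : ∀ p : EuclideanSpace ℝ (Fin d) × EuclideanSpace ℝ (Fin d),
      ‖|h p.1 - h p.2|‖ ≤ 1 := by
    intro p
    rw [Real.norm_eq_abs, abs_abs, abs_sub_le_iff]
    constructor <;>
      linarith [(hrange p.1).1, (hrange p.1).2, (hrange p.2).1, (hrange p.2).2]
  have hintstar : Integrable (fun p => |hstar p.1 - hstar p.2|) γ := by
    refine ⟨(((hstarmeas.comp measurable_fst).sub
      (hstarmeas.comp measurable_snd)).abs).aestronglyMeasurable, ?_⟩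
    exact HasFiniteIntegral.of_bounded (C := 1) (Filter.Eventually.of_forall hbdstar)
  have hinth : Integrable (fun p => |h p.1 - h p.2|) γ := by
    refine ⟨(((hmeas.comp measurable_fst).sub
      (hmeas.comp measurable_snd)).abs).aestronglyMeasurable, ?_⟩
    exact HasFiniteIntegral.of_bounded (C := 1) (Filter.Eventually.of_forall hbdh)
  rw [hintD, hintQ, ← integral_sub hint1 hint2]
  have key : ∀ p : EuclideanSpace ℝ (Fin d) × EuclideanSpace ℝ (Fin d),
      |f p.1 - f p.2| ≤ L * |hstar p.1 - hstar p.2| + L * |h p.1 - h p.2| := by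
    intro ⟨x, y⟩
    simp only [hf_def]
    have h1 := hℓlip₂ (h x) (hstar x) (hstar y)
    have h2 := hℓlip₁ (h x) (h y) (hstar y)
    calc |ℓ (h x) (hstar x) - ℓ (h y) (hstar y)|
        = |(ℓ (h x) (hstar x) - ℓ (h x) (hstar y)) + (ℓ (h x) (hstar y) - ℓ (h y) (hstar y))| := by
          ring_nf
      _ ≤ |ℓ (h x) (hstar x) - ℓ (h x) (hstar y)| + |ℓ (h x) (hstar y) - ℓ (h y) (hstar y)| :=
          abs_add_le _ _
      _ ≤ L * |hstar x - hstar y| + L * |h x - h y| := add_le_add h1 h2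
  calc |∫ p, (f p.1 - f p.2) ∂γ| ≤ ∫ p, |f p.1 - f p.2| ∂γ := by
        simpa [Real.norm_eq_abs] using norm_integral_le_integral_norm (fun p => f p.1 - f p.2) (μ := γ)
    _ ≤ ∫ p, (L * |hstar p.1 - hstar p.2| + L * |h p.1 - h p.2|) ∂γ := by
        refine integral_mono ((hint1.sub hint2).abs) ?_ key
        exact (hintstar.const_mul L).add (hinth.const_mul L)
    _ = L * ∫ p, |hstar p.1 - hstar p.2| ∂γ + L * ∫ p, |h p.1 - h p.2| ∂γ := by
        rw [integral_add (hintstar.const_mul L) (hinth.const_mul L),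
          integral_const_mul, integral_const_mul]
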